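/- arXiv:2009.11841 — 5 statements merged into one kernel-verified Lean document; each statement's English description precedes it below -/
import Mathlib

section
/- Let D be a discrete distribution supported on values z_1 < z_2 < ... < z_k with probability mass f, survival function S(x) = Pr[V ≥ x], and virtual value φ(z_k) = z_k and φ(z_ℓ) = z_ℓ - (z_{ℓ+1} - z_ℓ) · S(z_{ℓ+1})/f(z_ℓ) for ℓ < k. Let r be the smallest value in the support maximizing r·S(r). Then φ(r) ≥ 0. -/
/-!
Multiplying the virtual value by the mass turns it into a difference of revenues:
`f(z_ℓ) φ(z_ℓ) = z_ℓ S(z_ℓ) - z_{ℓ+1} S(z_{ℓ+1})`, because `S(z_ℓ) = f(z_ℓ) + S(z_{ℓ+1})`.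
Since `r` maximizes the revenue `z S(z)`, this difference is nonnegative at `r`; at the top
point of the support `φ(z_k) = z_k > 0`.
-/

open Finset

/-- Survival function `S(z_i) = Pr[V ≥ z_i]` of a discrete distribution with
support indexed by `Fin k` and mass function `f`. -/
noncomputable def surv {k : ℕ} (f : Fin k → ℝ) (i : Fin k) : ℝ :=
  ∑ j ∈ Finset.univ.filter (fun j => i ≤ j), f j

/-- Myerson virtual value of a discrete distribution with support `z` and mass `f`:
`φ(z_k) = z_k` and `φ(z_ℓ) = z_ℓ - (z_{ℓ+1} - z_ℓ) · S(z_{ℓ+1}) / f(z_ℓ)` for `ℓ < k`. -/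
noncomputable def vv {k : ℕ} (z f : Fin k → ℝ) (i : Fin k) : ℝ :=
  if h : i.1 + 1 < k then
    z i - (z ⟨i.1 + 1, h⟩ - z i) * surv f ⟨i.1 + 1, h⟩ / f i
  else z i

section VirtualValue

variable {k : ℕ} (z f : Fin k → ℝ) (i : Fin k)

theorem surv_eq_add_surv_succ (h : i.1 + 1 < k) :
    surv f i = f i + surv f ⟨i.1 + 1, h⟩ := by
  have hfilter : univ.filter (fun j => i ≤ j)
      = insert i (univ.filter (fun j => (⟨i.1 + 1, h⟩ : Fin k) ≤ j)) := by
    ext j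
    simp only [mem_filter, mem_insert, mem_univ, true_and, Fin.le_def, Fin.ext_iff]
    omega
  rw [surv, surv, hfilter, sum_insert]
  simp [Fin.le_def]

theorem mul_vv_eq_revenue_sub_revenue_succ (h : i.1 + 1 < k) (hfi : f i ≠ 0) :
    f i * vv z f i = z i * surv f i - z ⟨i.1 + 1, h⟩ * surv f ⟨i.1 + 1, h⟩ := by
  rw [vv, dif_pos h, surv_eq_add_surv_succ f i h]
  field_simp
  ring

theorem vv_nonneg_of_revenue_succ_le (h : i.1 + 1 < k) (hfi : 0 < f i)
    (hrev : z ⟨i.1 + 1, h⟩ * surv f ⟨i.1 + 1, h⟩ ≤ z i * surv f i) :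
    0 ≤ vv z f i := by
  rw [← mul_nonneg_iff_of_pos_left hfi, mul_vv_eq_revenue_sub_revenue_succ z f i h hfi.ne']
  exact sub_nonneg.mpr hrev

theorem vv_of_not_lt (h : ¬ i.1 + 1 < k) : vv z f i = z i :=
  dif_neg h

end VirtualValue

theorem stmt0_general (k : ℕ) (z f : Fin k → ℝ)
    (hzpos : ∀ i, 0 < z i)
    (hf : ∀ i, 0 < f i)
    (r : Fin k)
    (hrmax : ∀ i, z i * surv f i ≤ z r * surv f r) :
    0 ≤ vv z f r := by
  by_cases h : r.1 + 1 < k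
  · exact vv_nonneg_of_revenue_succ_le z f r h (hf r) (hrmax _)
  · rw [vv_of_not_lt z f r h]
    exact (hzpos r).le

/-- If `r` is the smallest support point maximizing the revenue `r·S(r)`,
then the virtual value at `r` is nonnegative. -/
theorem stmt0 (k : ℕ) (hk : 0 < k) (z f : Fin k → ℝ)
    (hz : StrictMono z) (hzpos : ∀ i, 0 < z i)
    (hf : ∀ i, 0 < f i) (hsum : ∑ i, f i = 1)
    (r : Fin k)
    (hrmax : ∀ i, z i * surv f i ≤ z r * surv f r)
    (hrmin : ∀ i, z i * surv f i = z r * surv f r → r ≤ i) :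
    0 ≤ vv z f r :=
  stmt0_general k z f hzpos hf r hrmax
end

section
/- Let Θ be a discrete regular distribution with survival function S and reserve price r. Then for any u ≤ v < r in the support of Θ: (1) u·S(u) ≥ ((1 - S(u))/(1 - S(v))) · v·S(v), and (2) u·S(u) ≤ v·S(v). -/
/-!
Write `R(x) = x·S(x)` for the revenue curve. Since `S(x_t) = f(x_t) + S(x_{t+1})`, the definition
of `φ` says exactly `R(x_t) - R(x_{t+1}) = f(x_t)·φ(x_t)`, so differences of `R` are `f`-weighted
sums of virtual values. Below `r` every virtual value is nonpositive, since otherwise regularity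
would make `R(x_t) > R(r)`; this gives (2). For (1), regularity says that the `f`-weighted average
of `φ` over `[x_1, u)` is at most its average over `[u, v)`, i.e.
`(S(u) - S(v))·(R(x_1) - R(u)) ≤ (1 - S(u))·(R(u) - R(v))`, and `R(x_1) = x_1 > 0` turns this
into (1).
-/

open Finset

lemma Fin.sub_eq_sum_Ico_of_sub_succ {M : Type*} [AddCommGroup M] {k : ℕ} {G g : Fin k → M}
    (hstep : ∀ (t : Fin k) (h : t.1 + 1 < k), G t - G ⟨t.1 + 1, h⟩ = g t)
    {a b : Fin k} (hab : a ≤ b) : G a - G b = ∑ t ∈ Ico a b, g t := by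
  suffices ∀ m, a.1 ≤ m → ∀ hm : m < k, G a - G ⟨m, hm⟩ = ∑ t ∈ Ico a ⟨m, hm⟩, g t from
    this b.1 hab b.2
  intro m ham
  induction m, ham using Nat.le_induction with
  | base => simp
  | succ m ham ih =>
    intro hm
    have hIco : Ico a ⟨m + 1, hm⟩ = insert ⟨m, by omega⟩ (Ico a ⟨m, by omega⟩) := by
      ext x; simp only [mem_Ico, mem_insert, Fin.le_def, Fin.lt_def, Fin.ext_iff]; omega
    rw [hIco, sum_insert (by simp), ← ih (by omega), ← hstep _ hm]
    abel

lemma sum_mul_sum_le_sum_mul_sum_of_le {ι R : Type*} [CommSemiring R] [PartialOrder R]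
    [IsOrderedRing R] {s t : Finset ι} {w φ : ι → R} (hw : ∀ i, 0 ≤ w i)
    (hφ : ∀ x ∈ s, ∀ y ∈ t, φ x ≤ φ y) :
    (∑ y ∈ t, w y) * ∑ x ∈ s, w x * φ x ≤ (∑ x ∈ s, w x) * ∑ y ∈ t, w y * φ y := by
  rw [mul_comm, sum_mul_sum, sum_mul_sum]
  refine sum_le_sum fun x hx => sum_le_sum fun y hy => ?_
  calc w x * φ x * w y = w x * w y * φ x := by ring
    _ ≤ w x * w y * φ y := mul_le_mul_of_nonneg_left (hφ x hx y hy) (mul_nonneg (hw x) (hw y))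
    _ = w x * (w y * φ y) := by ring

lemma surv_eq_sum_Ici {k : ℕ} (f : Fin k → ℝ) (i : Fin k) : surv f i = ∑ j ∈ Ici i, f j := by
  rw [surv, filter_le_eq_Ici]

lemma surv_sub_surv {k : ℕ} (f : Fin k → ℝ) {a b : Fin k} (hab : a ≤ b) :
    surv f a - surv f b = ∑ t ∈ Ico a b, f t := by
  have hunion : Ico a b ∪ Ici b = Ici a := by
    rw [← coe_inj]; push_cast; exact Set.Ico_union_Ici_eq_Ici hab
  rw [surv_eq_sum_Ici, surv_eq_sum_Ici, ← hunion, sum_union, add_sub_cancel_right]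
  exact disjoint_left.2 fun x hx hx' => (mem_Ico.1 hx).2.not_ge (mem_Ici.1 hx')

lemma surv_sub_surv_succ {k : ℕ} (f : Fin k → ℝ) (t : Fin k) (h : t.1 + 1 < k) :
    surv f t - surv f ⟨t.1 + 1, h⟩ = f t := by
  have hIco : Ico t ⟨t.1 + 1, h⟩ = {t} := by
    ext x; simp only [mem_Ico, mem_singleton, Fin.le_def, Fin.lt_def, Fin.ext_iff]; omega
  rw [surv_sub_surv f (Fin.le_def.2 (Nat.le_succ _)), hIco, sum_singleton]

lemma mul_surv_sub_mul_surv_succ {k : ℕ} (z : Fin k → ℝ) {f : Fin k → ℝ} (t : Fin k)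
    (hft : f t ≠ 0) (h : t.1 + 1 < k) :
    z t * surv f t - z ⟨t.1 + 1, h⟩ * surv f ⟨t.1 + 1, h⟩ = f t * vv z f t := by
  rw [vv, dif_pos h, eq_add_of_sub_eq (surv_sub_surv_succ f t h)]
  field_simp
  ring

lemma mul_surv_sub_mul_surv {k : ℕ} (z : Fin k → ℝ) {f : Fin k → ℝ} (hf : ∀ t, f t ≠ 0)
    {a b : Fin k} (hab : a ≤ b) :
    z a * surv f a - z b * surv f b = ∑ t ∈ Ico a b, f t * vv z f t :=
  Fin.sub_eq_sum_Ico_of_sub_succ (fun t h => mul_surv_sub_mul_surv_succ z t (hf t) h) hab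

lemma vv_nonpos_of_lt_argmax {k : ℕ} {z f : Fin k → ℝ} (hf : ∀ t, 0 < f t)
    (hreg : Monotone (vv z f)) {r : Fin k} (hr : ∀ i, z i * surv f i ≤ z r * surv f r)
    {t : Fin k} (htr : t < r) : vv z f t ≤ 0 := by
  by_contra! hpos
  have hsum : 0 < ∑ s ∈ Ico t r, f s * vv z f s :=
    sum_pos (fun s hs => mul_pos (hf s) (hpos.trans_le (hreg (mem_Ico.1 hs).1)))
      ⟨t, mem_Ico.2 ⟨le_rfl, htr⟩⟩
  rw [← mul_surv_sub_mul_surv z (fun s => (hf s).ne') htr.le] at hsum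
  linarith [hr t]

theorem stmt4_general (k : ℕ) (z f : Fin k → ℝ)
    (hz : StrictMono z) (hzpos : ∀ i, 0 < z i)
    (hf : ∀ i, 0 < f i) (hsum : ∑ i, f i = 1)
    (hreg : Monotone (vv z f))
    (r : Fin k)
    (hrmax : ∀ i, z i * surv f i ≤ z r * surv f r)
    (i j : Fin k) (hij : i ≤ j) (hjr : z j < z r)
    (hSv : surv f j < 1) :
    (1 - surv f i) / (1 - surv f j) * (z j * surv f j) ≤ z i * surv f i ∧
    z i * surv f i ≤ z j * surv f j := by
  have hf0 : ∀ t, f t ≠ 0 := fun t => (hf t).ne'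
  set o : Fin k := ⟨0, i.pos⟩
  have ho : ∀ t, o ≤ t := fun t => Fin.le_def.2 (Nat.zero_le t.1)
  have hSo : surv f o = 1 := by
    rw [surv_eq_sum_Ici, ← hsum, eq_univ_of_forall fun t => mem_Ici.2 (ho t)]
  have hSij : 0 ≤ surv f i - surv f j := by
    rw [surv_sub_surv f hij]; exact sum_nonneg fun t _ => (hf t).le
  have hcheb := sum_mul_sum_le_sum_mul_sum_of_le (s := Ico o i) (t := Ico i j)
    (fun t => (hf t).le) fun x hx y hy => hreg ((mem_Ico.1 hx).2.le.trans (mem_Ico.1 hy).1)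
  rw [← surv_sub_surv f hij, ← surv_sub_surv f (ho i), ← mul_surv_sub_mul_surv z hf0 hij,
    ← mul_surv_sub_mul_surv z hf0 (ho i), hSo] at hcheb
  refine ⟨?_, ?_⟩
  · rw [div_mul_eq_mul_div, div_le_iff₀ (sub_pos.2 hSv)]
    linarith [mul_nonneg hSij (hzpos o).le]
  · have hjr' : j < r := hz.lt_iff_lt.1 hjr
    have hvv : ∑ t ∈ Ico i j, f t * vv z f t ≤ 0 := sum_nonpos fun t ht =>
      mul_nonpos_of_nonneg_of_nonpos (hf t).le
        (vv_nonpos_of_lt_argmax hf hreg hrmax ((mem_Ico.1 ht).2.trans hjr'))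
    linarith [mul_surv_sub_mul_surv z hf0 hij]

/-- For a discrete regular distribution `Θ` with reserve price `r` and support
values `u ≤ v < r` (indices `i ≤ j`), with `S(v) < 1`:
(1) `u·S(u) ≥ ((1 − S(u))/(1 − S(v))) · v·S(v)`, and (2) `u·S(u) ≤ v·S(v)`. -/
theorem stmt4 (k : ℕ) (hk : 0 < k) (z f : Fin k → ℝ)
    (hz : StrictMono z) (hzpos : ∀ i, 0 < z i)
    (hf : ∀ i, 0 < f i) (hsum : ∑ i, f i = 1)
    (hreg : Monotone (vv z f))
    (r : Fin k)
    (hrmax : ∀ i, z i * surv f i ≤ z r * surv f r)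
    (hrmin : ∀ i, z i * surv f i = z r * surv f r → r ≤ i)
    (i j : Fin k) (hij : i ≤ j) (hjr : z j < z r)
    (hSv : surv f j < 1) :
    (1 - surv f i) / (1 - surv f j) * (z j * surv f j) ≤ z i * surv f i ∧
    z i * surv f i ≤ z j * surv f j :=
  stmt4_general k z f hz hzpos hf hsum hreg r hrmax i j hij hjr hSv
end

section
/- Given n independent Bernoulli random variables X_1, ..., X_n with N = Σ_i X_i, there exists j ∈ {1, ..., n} such that (1/j)·Σ_{i=1}^{j} Pr[N ≥ i] - Pr[N ≥ j+1] ≥ Pr[N ≥ 1]/15. -/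
open MeasureTheory ProbabilityTheory Finset

/-! With `m = 𝔼N` and `P k = Pr[N ≥ k]`, independence gives the factorial-moment bound
`𝔼[N(N-1)] ≤ m²`, hence `k(k-1) P k ≤ m²` (Markov) and `P 1 ≥ m - m²/2` (Bonferroni), while
`∑_{k=1}^n P k = m`. These facts alone force the inequality: take `j = 1` when `m < 2/7`,
`j = n` when `n ≤ 4m`, and otherwise `j = ⌈4m⌉`, for which the tail `∑_{k>j} P k ≤ m²/j ≤ m/4`
and `j P (j+1) ≤ m/4` leave an average of at least `m/(2j) ≥ 1/15`. -/

lemma exists_sum_eq_natCast_of_eq_zero_or_eq_one {ι : Type*} (s : Finset ι) {f : ι → ℝ}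
    (hf : ∀ i, f i = 0 ∨ f i = 1) : ∃ k : ℕ, k ≤ #s ∧ ∑ i ∈ s, f i = k := by
  classical
  refine ⟨#{i ∈ s | f i = 1}, card_filter_le _ _, ?_⟩
  rw [card_filter, Nat.cast_sum]
  refine sum_congr rfl fun i _ => ?_
  rcases hf i with h | h <;> simp [h]

lemma Nat.cast_mul_cast_sub_one_nonneg (k : ℕ) : (0 : ℝ) ≤ k * (k - 1) := by
  rcases k with _ | k
  · simp
  · rw [Nat.cast_succ, add_sub_cancel_right]; positivity

lemma integral_sum_mul_sum_sub_one_le_sq {Ω ι : Type*} [MeasurableSpace Ω] {μ : Measure Ω}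
    [IsProbabilityMeasure μ] {X : ι → Ω → ℝ} {s : Finset ι}
    (hmeas : ∀ i, Measurable (X i)) (hX : ∀ i ω, 0 ≤ X i ω ∧ X i ω ≤ 1)
    (hindep : Set.Pairwise ↑s fun i j => IndepFun (X i) (X j) μ) :
    ∫ ω, (∑ i ∈ s, X i ω) * ((∑ i ∈ s, X i ω) - 1) ∂μ ≤ (∫ ω, ∑ i ∈ s, X i ω ∂μ) ^ 2 := by
  have hLp : ∀ i, MemLp (X i) 2 μ := fun i =>
    MemLp.of_bound (hmeas i).aestronglyMeasurable 1 (ae_of_all _ fun ω => by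
      rw [Real.norm_eq_abs, abs_le]; constructor <;> linarith [hX i ω])
  have hsq_le : ∀ i, X i ^ 2 ≤ X i := fun i ω => by
    have := hX i ω; simp only [Pi.pow_apply]; nlinarith
  set S : Ω → ℝ := fun ω => ∑ i ∈ s, X i ω
  have hS_eq : ∑ i ∈ s, X i = S := by ext ω; simp [S]
  have hSLp : MemLp S 2 μ := hS_eq ▸ memLp_finsetSum' s fun i _ => hLp i
  have hvar : μ[S ^ 2] - μ[S] ^ 2 ≤ μ[S] := calc
    μ[S ^ 2] - μ[S] ^ 2 = ∑ i ∈ s, variance (X i) μ := by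
      rw [← variance_eq_sub hSLp, ← hS_eq, IndepFun.variance_sum (fun i _ => hLp i) hindep]
    _ ≤ ∑ i ∈ s, μ[X i] := sum_le_sum fun i _ =>
      (variance_le_expectation_sq (hmeas i).aestronglyMeasurable).trans
        (integral_mono ((hLp i).integrable_sq) ((hLp i).integrable one_le_two) (hsq_le i))
    _ = μ[S] := (integral_finsetSum s fun i _ => (hLp i).integrable one_le_two).symm
  have hfact : ∫ ω, S ω * (S ω - 1) ∂μ = μ[S ^ 2] - μ[S] := by
    rw [← integral_sub (f := S ^ 2) hSLp.integrable_sq (hSLp.integrable one_le_two)]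
    congr 1; ext ω; simp only [Pi.pow_apply]; ring
  change ∫ ω, S ω * (S ω - 1) ∂μ ≤ μ[S] ^ 2
  linarith

section NatValued

variable {Ω : Type*} [MeasurableSpace Ω] {μ : Measure Ω} {N : Ω → ℝ} {n : ℕ}

lemma measureReal_cast_add_one_le_eq_zero (hN : ∀ ω, ∃ k : ℕ, k ≤ n ∧ N ω = k) :
    μ.real {ω | (n : ℝ) + 1 ≤ N ω} = 0 := by
  have hempty : {ω | (n : ℝ) + 1 ≤ N ω} = ∅ := by
    refine Set.eq_empty_of_forall_notMem fun ω hω => ?_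
    obtain ⟨k, hk, hNk⟩ := hN ω
    simp only [Set.mem_ofPred_eq, hNk] at hω
    exact absurd hω (by norm_cast; omega)
  rw [hempty, measureReal_empty]

variable [IsFiniteMeasure μ]

lemma integrable_comp_of_natValued (hNmeas : Measurable N) (hN : ∀ ω, ∃ k : ℕ, k ≤ n ∧ N ω = k)
    {f : ℝ → ℝ} (hf : Measurable f) : Integrable (fun ω => f (N ω)) μ := by
  refine Integrable.of_bound (hf.comp hNmeas).aestronglyMeasurable
    (∑ k ∈ range (n + 1), ‖f k‖) (ae_of_all _ fun ω => ?_)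
  obtain ⟨k, hk, hNk⟩ := hN ω
  rw [hNk]
  exact single_le_sum (f := fun k : ℕ => ‖f k‖) (fun _ _ => norm_nonneg _)
    (mem_range.2 (Nat.lt_succ_of_le hk))

lemma mul_sub_one_mul_measureReal_le_integral (hNmeas : Measurable N)
    (hN : ∀ ω, ∃ k : ℕ, k ≤ n ∧ N ω = k) (i : ℕ) :
    (i : ℝ) * (i - 1) * μ.real {ω | (i : ℝ) ≤ N ω} ≤ ∫ ω, N ω * (N ω - 1) ∂μ := by
  have hmono : {ω | (i : ℝ) ≤ N ω} ⊆ {ω | (i : ℝ) * (i - 1) ≤ N ω * (N ω - 1)} := by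
    intro ω hω
    obtain ⟨k, -, hNk⟩ := hN ω
    simp only [Set.mem_ofPred_eq, hNk] at hω ⊢
    rcases i with _ | i
    · simpa using Nat.cast_mul_cast_sub_one_nonneg k
    · push_cast at hω ⊢
      nlinarith
  calc (i : ℝ) * (i - 1) * μ.real {ω | (i : ℝ) ≤ N ω}
      ≤ (i : ℝ) * (i - 1) * μ.real {ω | (i : ℝ) * (i - 1) ≤ N ω * (N ω - 1)} := by
        exact mul_le_mul_of_nonneg_left (measureReal_mono hmono)
          (Nat.cast_mul_cast_sub_one_nonneg i)
    _ ≤ ∫ ω, N ω * (N ω - 1) ∂μ :=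
      mul_meas_ge_le_integral_of_nonneg (ae_of_all _ fun ω => by
          obtain ⟨k, -, hNk⟩ := hN ω
          rw [Pi.zero_apply, hNk]
          exact Nat.cast_mul_cast_sub_one_nonneg k)
        (integrable_comp_of_natValued (f := fun x => x * (x - 1)) hNmeas hN (by fun_prop)) _

lemma integral_sub_half_le_measureReal_one_le (hNmeas : Measurable N)
    (hN : ∀ ω, ∃ k : ℕ, k ≤ n ∧ N ω = k) :
    ∫ ω, N ω ∂μ - (∫ ω, N ω * (N ω - 1) ∂μ) / 2 ≤ μ.real {ω | 1 ≤ N ω} := by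
  have hs : MeasurableSet {ω | 1 ≤ N ω} := measurableSet_le measurable_const hNmeas
  have hN_int : Integrable N μ := integrable_comp_of_natValued (f := id) hNmeas hN measurable_id
  have hfact_int : Integrable (fun ω => N ω * (N ω - 1)) μ :=
    integrable_comp_of_natValued (f := fun x => x * (x - 1)) hNmeas hN (by fun_prop)
  rw [← integral_indicator_one hs, ← integral_div, ← integral_sub hN_int (hfact_int.div_const 2)]
  refine integral_mono (hN_int.sub (hfact_int.div_const 2))
    ((integrable_const 1).indicator hs) fun ω => ?_
  obtain ⟨k, -, hNk⟩ := hN ω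
  simp only [Set.indicator, Set.mem_ofPred_eq, hNk, Pi.one_apply]
  rcases k with _ | k
  · norm_num
  · push_cast
    rw [if_pos (by linarith)]
    nlinarith [Nat.cast_mul_cast_sub_one_nonneg k]

lemma sum_measureReal_le_eq_integral (hNmeas : Measurable N)
    (hN : ∀ ω, ∃ k : ℕ, k ≤ n ∧ N ω = k) :
    ∑ i ∈ Icc 1 n, μ.real {ω | (i : ℝ) ≤ N ω} = ∫ ω, N ω ∂μ := by
  have hs : ∀ i : ℕ, MeasurableSet {ω | (i : ℝ) ≤ N ω} := fun i =>
    measurableSet_le measurable_const hNmeas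
  simp_rw [← integral_indicator_one (hs _)]
  rw [← integral_finsetSum _ fun i _ => (integrable_const 1).indicator (hs i)]
  refine integral_congr_ae (ae_of_all _ fun ω => ?_)
  obtain ⟨k, hk, hNk⟩ := hN ω
  have hfilter : {i ∈ Icc 1 n | i ≤ k} = Icc 1 k := by
    ext i; simp only [mem_filter, mem_Icc]; omega
  simp only [Set.indicator, Set.mem_ofPred_eq, hNk, Nat.cast_le, Pi.one_apply, sum_boole,
    hfilter, Nat.card_Icc, add_tsub_cancel_right]

end NatValued

section TailSequence

variable {P : ℕ → ℝ} {m : ℝ}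

lemma sum_Ioc_le_of_mul_sub_one_mul_le {C : ℝ} {j n : ℕ} (hj : 1 ≤ j) (hjn : j ≤ n)
    (hP : ∀ i, j < i → (i : ℝ) * (i - 1) * P i ≤ C) :
    ∑ i ∈ Ioc j n, P i ≤ C * (1 / j - 1 / n) := by
  induction n, hjn using Nat.le_induction with
  | base => simp
  | succ n hjn ih =>
    have hn : (1 : ℝ) ≤ n := by exact_mod_cast hj.trans hjn
    have hlast : P (n + 1) ≤ C / ((n + 1) * n) := by
      rw [le_div_iff₀ (by positivity), mul_comm]
      simpa using hP (n + 1) (by omega)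
    rw [sum_Ioc_succ_top (by omega)]
    calc ∑ i ∈ Ioc j n, P i + P (n + 1) ≤ C * (1 / j - 1 / n) + C / ((n + 1) * n) :=
          add_le_add ih hlast
      _ = C * (1 / j - 1 / ((n + 1 : ℕ) : ℝ)) := by
          field_simp
          push_cast
          ring

lemma average_sub_next_ge_of_four_mul_le (hm : 2 / 7 ≤ m) (hP1 : P 1 ≤ 1)
    (htail : ∀ i : ℕ, 2 ≤ i → (i : ℝ) * (i - 1) * P i ≤ m ^ 2) {j n : ℕ} (hjn : j ≤ n)
    (hsum : ∑ i ∈ Icc 1 n, P i = m) (hj : 4 * m ≤ j) (hj' : j ≤ 4 * m + 1) :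
    1 / (j : ℝ) * ∑ i ∈ Icc 1 j, P i - P (j + 1) ≥ P 1 / 15 := by
  have hj0 : (0 : ℝ) < j := by linarith
  have hj1 : 1 ≤ j := by exact_mod_cast (by linarith : (1 : ℝ) ≤ j)
  set T := ∑ i ∈ Ioc j n, P i
  have hsplit : ∑ i ∈ Icc 1 j, P i = m - T := by
    rw [← hsum, ← zero_add 1, Icc_add_one_left_eq_Ioc, Icc_add_one_left_eq_Ioc,
      ← sum_Ioc_consecutive _ (Nat.zero_le j) hjn, add_sub_cancel_right]
  have hT : T ≤ m / 4 := calc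
    T ≤ m ^ 2 * (1 / j - 1 / n) :=
      sum_Ioc_le_of_mul_sub_one_mul_le hj1 hjn fun i hi => htail i (by omega)
    _ ≤ m ^ 2 / j := by
      rw [mul_sub, mul_one_div]
      exact sub_le_self _ (by positivity)
    _ ≤ m / 4 := by
      rw [div_le_iff₀ hj0]
      nlinarith
  have hnext : j * P (j + 1) ≤ m / 4 := by
    have := htail (j + 1) (by omega)
    push_cast at this
    nlinarith
  calc P 1 / 15 ≤ 1 / 15 := by linarith
    _ ≤ m / 2 / j := by
      rw [le_div_iff₀ hj0]
      linarith
    _ ≤ (m - T - j * P (j + 1)) / j := by gcongr; linarith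
    _ = 1 / (j : ℝ) * ∑ i ∈ Icc 1 j, P i - P (j + 1) := by
      rw [hsplit]
      field_simp

lemma exists_average_sub_next_ge {n : ℕ} (hn : 1 ≤ n) (hP : ∀ k, 0 ≤ P k) (hP1 : P 1 ≤ 1)
    (hP1_ge : m - m ^ 2 / 2 ≤ P 1) (htail : ∀ i : ℕ, 2 ≤ i → (i : ℝ) * (i - 1) * P i ≤ m ^ 2)
    (hsum : ∑ i ∈ Icc 1 n, P i = m) (hlast : P (n + 1) = 0) :
    ∃ j ∈ Icc 1 n, 1 / (j : ℝ) * ∑ i ∈ Icc 1 j, P i - P (j + 1) ≥ P 1 / 15 := by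
  have hm0 : 0 ≤ m := hsum ▸ sum_nonneg fun i _ => hP i
  rcases lt_or_ge m (2 / 7) with hsmall | hlarge
  · refine ⟨1, mem_Icc.2 ⟨le_rfl, hn⟩, ?_⟩
    have h2 := htail 2 le_rfl
    norm_num at h2 ⊢
    nlinarith
  rcases le_or_gt (n : ℝ) (4 * m) with hn_le | hn_gt
  · refine ⟨n, mem_Icc.2 ⟨hn, le_rfl⟩, ?_⟩
    have hn0 : (0 : ℝ) < n := by exact_mod_cast hn
    rw [hsum, hlast, sub_zero, one_div_mul_eq_div]
    calc P 1 / 15 ≤ 1 / 4 := by linarith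
      _ ≤ m / n := by rw [le_div_iff₀ hn0]; linarith
  have hceil := Nat.ceil_lt_add_one (by positivity : (0 : ℝ) ≤ 4 * m)
  refine ⟨⌈4 * m⌉₊, mem_Icc.2 ⟨Nat.ceil_pos.2 (by linarith), Nat.ceil_le.2 hn_gt.le⟩, ?_⟩
  exact average_sub_next_ge_of_four_mul_le hlarge hP1 htail (Nat.ceil_le.2 hn_gt.le) hsum
    (Nat.le_ceil _) hceil.le

end TailSequence

/-- Given `n` independent Bernoulli random variables `X_1, ..., X_n` with sum `N`,
there exists `j ∈ {1, ..., n}` with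
`(1/j)·Σ_{i=1}^{j} Pr[N ≥ i] − Pr[N ≥ j+1] ≥ Pr[N ≥ 1]/15`. -/
theorem stmt6 {Ω : Type*} [MeasurableSpace Ω] (μ : Measure Ω) [IsProbabilityMeasure μ]
    (n : ℕ) (hn : 1 ≤ n) (X : Fin n → Ω → ℝ)
    (hmeas : ∀ i, Measurable (X i))
    (hval : ∀ i ω, X i ω = 0 ∨ X i ω = 1)
    (hindep : iIndepFun X μ) :
    ∃ j ∈ Finset.Icc 1 n,
      (1 / (j : ℝ)) *
          (∑ i ∈ Finset.Icc 1 j, (μ {ω | (i : ℝ) ≤ ∑ t, X t ω}).toReal) -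
        (μ {ω | ((j : ℝ) + 1) ≤ ∑ t, X t ω}).toReal ≥
      (μ {ω | (1 : ℝ) ≤ ∑ t, X t ω}).toReal / 15 := by
  set N : Ω → ℝ := fun ω => ∑ t, X t ω
  have hNmeas : Measurable N := Finset.measurable_sum _ fun t _ => hmeas t
  have hNval : ∀ ω, ∃ k : ℕ, k ≤ n ∧ N ω = k := fun ω => by
    simpa using exists_sum_eq_natCast_of_eq_zero_or_eq_one univ (hval · ω)
  have hfact : ∫ ω, N ω * (N ω - 1) ∂μ ≤ (∫ ω, N ω ∂μ) ^ 2 :=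
    integral_sum_mul_sum_sub_one_le_sq hmeas
      (fun t ω => by rcases hval t ω with h | h <;> simp [h])
      fun s _ t _ hst => hindep.indepFun hst
  have hbonferroni : ∫ ω, N ω ∂μ - (∫ ω, N ω ∂μ) ^ 2 / 2 ≤ μ.real {ω | ((1 : ℕ) : ℝ) ≤ N ω} := by
    have := integral_sub_half_le_measureReal_one_le (μ := μ) hNmeas hNval
    rw [Nat.cast_one]
    linarith
  obtain ⟨j, hj, hineq⟩ := exists_average_sub_next_ge (P := fun k : ℕ => μ.real {ω | (k : ℝ) ≤ N ω})
    hn (fun _ => measureReal_nonneg) measureReal_le_one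
    hbonferroni
    (fun i _ => (mul_sub_one_mul_measureReal_le_integral hNmeas hNval i).trans hfact)
    (sum_measureReal_le_eq_integral hNmeas hNval)
    (by simpa using measureReal_cast_add_one_le_eq_zero (μ := μ) hNval)
  refine ⟨j, hj, ?_⟩
  simpa [measureReal_def] using hineq
end

section
/- If X_1, ..., X_n are independent {0,1}-valued random variables and N = Σ_i X_i, then for any positive integer i, Pr[N ≥ 2i] ≤ Pr[N ≥ i]^2. -/
/-!
Take `a = b = i`. Let `k` be the first time the partial sums of the `X_t` reach `a`. The steps are
`0` or `1`, so the partial sum up to `k` is exactly `a`, and on `{N ≥ a + b}` the variables from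
time `k` on sum to at least `b`. The event `{first passage at k}` depends only on the variables
before `k`, the tail sum only on those from `k` on, so summing over `k` gives
`Pr[N ≥ a + b] ≤ ∑ₖ Pr[first passage at k] · Pr[N ≥ b] = Pr[N ≥ a] · Pr[N ≥ b]`.
-/

open MeasureTheory ProbabilityTheory Finset

section PrefixSums

variable {n : ℕ}

def prefixSum (x : Fin n → ℕ) (k : ℕ) : ℕ := ∑ t ∈ univ.filter (fun t : Fin n => t < k), x t

def suffixSum (x : Fin n → ℕ) (k : ℕ) : ℕ := ∑ t ∈ univ.filter (fun t : Fin n => k ≤ t), x t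

def IsFirstPassage (x : Fin n → ℕ) (a k : ℕ) : Prop :=
  a ≤ prefixSum x k ∧ ∀ j < k, prefixSum x j < a

variable (x : Fin n → ℕ)

lemma prefixSum_add_suffixSum (k : ℕ) : prefixSum x k + suffixSum x k = ∑ t, x t := by
  simpa only [prefixSum, suffixSum, not_lt] using
    sum_filter_add_sum_filter_not univ (fun t : Fin n => t < k) x

lemma suffixSum_le_sum (k : ℕ) : suffixSum x k ≤ ∑ t, x t :=
  sum_le_sum_of_subset (filter_subset _ _)

lemma prefixSum_zero : prefixSum x 0 = 0 := by simp [prefixSum]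

lemma prefixSum_of_le {k : ℕ} (hk : n ≤ k) : prefixSum x k = ∑ t, x t := by
  rw [prefixSum, filter_true_of_mem fun t _ => t.isLt.trans_le hk]

lemma prefixSum_succ_le (hx : ∀ t, x t ≤ 1) (k : ℕ) :
    prefixSum x (k + 1) ≤ prefixSum x k + 1 := by
  by_cases hk : k < n
  · have : univ.filter (fun t : Fin n => t < k + 1) =
        insert ⟨k, hk⟩ (univ.filter (fun t : Fin n => t < k)) := by
      ext t
      simp only [Order.lt_add_one_iff, mem_filter, mem_univ, true_and, mem_insert, Fin.ext_iff]
      omega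
    rw [prefixSum, prefixSum, this, sum_insert (by simp)]
    linarith [hx ⟨k, hk⟩]
  · rw [prefixSum_of_le x (by omega), prefixSum_of_le x (by omega)]
    omega

lemma exists_isFirstPassage {a : ℕ} (h : a ≤ ∑ t, x t) : ∃ k ≤ n, IsFirstPassage x a k := by
  classical
  have hex : ∃ k, a ≤ prefixSum x k := ⟨n, (prefixSum_of_le x le_rfl).symm ▸ h⟩
  exact ⟨Nat.find hex, Nat.find_min' hex ((prefixSum_of_le x le_rfl).symm ▸ h),
    Nat.find_spec hex, fun j hj => not_le.mp (Nat.find_min hex hj)⟩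

namespace IsFirstPassage

variable {x} {a k : ℕ}

lemma le_sum (h : IsFirstPassage x a k) : a ≤ ∑ t, x t :=
  h.1.trans <| (prefixSum_add_suffixSum x k).symm ▸ Nat.le_add_right _ _

lemma unique {j : ℕ} (hj : IsFirstPassage x a j) (hk : IsFirstPassage x a k) : j = k := by
  by_contra hne
  rcases Nat.lt_or_gt_of_ne hne with hlt | hlt
  · exact absurd hj.1 (not_le.mpr (hk.2 j hlt))
  · exact absurd hk.1 (not_le.mpr (hj.2 k hlt))

lemma prefixSum_eq (hx : ∀ t, x t ≤ 1) (h : IsFirstPassage x a k) : prefixSum x k = a := by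
  cases k with
  | zero => have := h.1; rw [prefixSum_zero] at this ⊢; omega
  | succ k => have := prefixSum_succ_le x hx k; have := h.1; have := h.2 k k.lt_succ_self; omega

lemma le_suffixSum (hx : ∀ t, x t ≤ 1) (h : IsFirstPassage x a k) {b : ℕ}
    (hab : a + b ≤ ∑ t, x t) : b ≤ suffixSum x k := by
  have := prefixSum_add_suffixSum x k
  have := h.prefixSum_eq hx
  omega

end IsFirstPassage

end PrefixSums

section Independence

variable {ι Ω β : Type*} [mβ : MeasurableSpace β] {X : ι → Ω → β}

lemma measurable_sum_iSup_comap [AddCommMonoid β] [MeasurableAdd₂ β] {S : Set ι} {s : Finset ι}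
    (hs : ∀ i ∈ s, i ∈ S) :
    Measurable[⨆ i ∈ S, mβ.comap (X i)] fun ω => ∑ i ∈ s, X i ω :=
  @Finset.measurable_sum _ _ _ _ _ _ (⨆ i ∈ S, mβ.comap (X i)) _ s fun i hi =>
    (comap_measurable (X i)).mono (le_iSup₂ (f := fun i _ => mβ.comap (X i)) i (hs i hi)) le_rfl

variable [MeasurableSpace Ω] {μ : Measure Ω}

lemma ProbabilityTheory.iIndepFun.measure_inter_eq_mul_of_measurableSet_iSup
    (hX : ∀ i, Measurable (X i)) (h : iIndepFun X μ) {S T : Set ι} (hST : Disjoint S T)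
    {A B : Set Ω}
    (hA : MeasurableSet[⨆ i ∈ S, mβ.comap (X i)] A)
    (hB : MeasurableSet[⨆ i ∈ T, mβ.comap (X i)] B) :
    μ (A ∩ B) = μ A * μ B :=
  ((indep_iSup_of_disjoint (fun i => (hX i).comap_le) ((iIndepFun_iff_iIndep _ _ _).mp h)
    hST).indepSet_of_measurableSet hA hB).measure_inter_eq_mul

end Independence

section BernoulliSums

variable {Ω : Type*} {n : ℕ} (X : Fin n → Ω → ℕ)

lemma measurableSet_isFirstPassage (a k : ℕ) :
    MeasurableSet[⨆ t ∈ {t : Fin n | t < k}, MeasurableSpace.comap (X t) inferInstance]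
      {ω | IsFirstPassage (X · ω) a k} := by
  have hsum : ∀ j ≤ k,
      Measurable[⨆ t ∈ {t : Fin n | t < k}, MeasurableSpace.comap (X t) inferInstance]
        fun ω => prefixSum (X · ω) j := fun j hj =>
    measurable_sum_iSup_comap fun t ht => lt_of_lt_of_le (mem_filter.mp ht).2 hj
  simp only [IsFirstPassage, Set.ofPred_and, Set.ofPred_forall]
  exact (hsum k le_rfl measurableSet_Ici).inter <|
    .iInter fun j => .iInter fun hj => hsum j hj.le measurableSet_Iio

lemma measurableSet_le_suffixSum (b k : ℕ) :
    MeasurableSet[⨆ t ∈ {t : Fin n | k ≤ t}, MeasurableSpace.comap (X t) inferInstance]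
      {ω | b ≤ suffixSum (X · ω) k} :=
  measurable_sum_iSup_comap (s := univ.filter fun t : Fin n => k ≤ t)
    (fun _ ht => (mem_filter.mp ht).2) measurableSet_Ici

theorem measure_add_le_sum_le_mul [MeasurableSpace Ω] {μ : Measure Ω}
    (hX : ∀ t, Measurable (X t)) (hX1 : ∀ t ω, X t ω ≤ 1) (hindep : iIndepFun X μ) (a b : ℕ) :
    μ {ω | a + b ≤ ∑ t, X t ω} ≤ μ {ω | a ≤ ∑ t, X t ω} * μ {ω | b ≤ ∑ t, X t ω} := by
  set A : ℕ → Set Ω := fun k => {ω | IsFirstPassage (X · ω) a k}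
  set T : ℕ → Set Ω := fun k => {ω | b ≤ suffixSum (X · ω) k}
  have hA : ∀ k, MeasurableSet (A k) := fun k =>
    iSup₂_le (fun t _ => (hX t).comap_le) _ (measurableSet_isFirstPassage X a k)
  have hA_disj : (range (n + 1) : Set ℕ).PairwiseDisjoint A := fun _ _ _ _ hjk =>
    Set.disjoint_left.mpr fun _ hj hk => hjk (hj.unique hk)
  have hA_cover : {ω | a ≤ ∑ t, X t ω} = ⋃ k ∈ range (n + 1), A k := by
    ext ω
    simp only [Set.mem_ofPred_eq, Set.mem_iUnion, mem_range, Nat.lt_succ_iff, exists_prop]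
    exact ⟨exists_isFirstPassage _, fun ⟨_, _, h⟩ => h.le_sum⟩
  have hAT_cover : {ω | a + b ≤ ∑ t, X t ω} ⊆ ⋃ k ∈ range (n + 1), A k ∩ T k := by
    intro ω hω
    obtain ⟨k, hk, hA⟩ := exists_isFirstPassage (X · ω) ((Nat.le_add_right a b).trans hω)
    exact Set.mem_biUnion (mem_range.mpr (Nat.lt_succ_of_le hk))
      ⟨hA, hA.le_suffixSum (hX1 · ω) hω⟩
  have hT : ∀ k, T k ⊆ {ω | b ≤ ∑ t, X t ω} := fun k _ hω => hω.trans (suffixSum_le_sum _ k)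
  calc μ {ω | a + b ≤ ∑ t, X t ω}
      ≤ ∑ k ∈ range (n + 1), μ (A k ∩ T k) :=
        (measure_mono hAT_cover).trans (measure_biUnion_finset_le _ _)
    _ = ∑ k ∈ range (n + 1), μ (A k) * μ (T k) := sum_congr rfl fun k _ =>
        hindep.measure_inter_eq_mul_of_measurableSet_iSup hX
          (Set.disjoint_left.mpr fun t (hlt : (t : ℕ) < k) (hge : k ≤ (t : ℕ)) =>
            absurd hge (not_le.mpr hlt))
          (measurableSet_isFirstPassage X a k) (measurableSet_le_suffixSum X b k)
    _ ≤ ∑ k ∈ range (n + 1), μ (A k) * μ {ω | b ≤ ∑ t, X t ω} := by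
        gcongr with k; exact hT k
    _ = μ {ω | a ≤ ∑ t, X t ω} * μ {ω | b ≤ ∑ t, X t ω} := by
        rw [← sum_mul, ← measure_biUnion_finset hA_disj fun k _ => hA k, hA_cover]

end BernoulliSums

theorem stmt7_general {Ω : Type*} [MeasurableSpace Ω] (μ : Measure Ω) [IsProbabilityMeasure μ]
    (n : ℕ) (X : Fin n → Ω → ℝ)
    (hmeas : ∀ i, Measurable (X i))
    (hval : ∀ i ω, X i ω = 0 ∨ X i ω = 1)
    (hindep : iIndepFun X μ)
    (i : ℕ) :
    (μ {ω | ((2 * i : ℕ) : ℝ) ≤ ∑ t, X t ω}).toReal ≤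
      (μ {ω | ((i : ℕ) : ℝ) ≤ ∑ t, X t ω}).toReal ^ 2 := by
  set toBit : ℝ → ℕ := fun x => if x = 0 then 0 else 1
  have htoBit : Measurable toBit :=
    .ite (measurableSet_singleton 0) measurable_const measurable_const
  have hsum : ∀ ω, ∑ t, X t ω = ((∑ t, toBit (X t ω) : ℕ) : ℝ) := fun ω => by
    push_cast
    exact sum_congr rfl fun t _ => by rcases hval t ω with h | h <;> simp [toBit, h]
  have key := measure_add_le_sum_le_mul (fun t ω => toBit (X t ω))
    (fun t => htoBit.comp (hmeas t)) (fun t ω => by simp only [toBit]; split <;> omega)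
    (hindep.comp _ fun _ => htoBit) i i
  simp only [hsum, Nat.cast_le, two_mul]
  calc _ ≤ (μ {ω | i ≤ ∑ t, toBit (X t ω)} * μ {ω | i ≤ ∑ t, toBit (X t ω)}).toReal :=
        ENNReal.toReal_mono (by finiteness) key
    _ = _ := by rw [ENNReal.toReal_mul, sq]

/-- If `X_1, ..., X_n` are independent `{0,1}`-valued random variables with sum `N`,
then for any positive integer `i`, `Pr[N ≥ 2i] ≤ Pr[N ≥ i]^2`. -/
theorem stmt7 {Ω : Type*} [MeasurableSpace Ω] (μ : Measure Ω) [IsProbabilityMeasure μ]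
    (n : ℕ) (X : Fin n → Ω → ℝ)
    (hmeas : ∀ i, Measurable (X i))
    (hval : ∀ i ω, X i ω = 0 ∨ X i ω = 1)
    (hindep : iIndepFun X μ)
    (i : ℕ) (hi : 1 ≤ i) :
    (μ {ω | ((2 * i : ℕ) : ℝ) ≤ ∑ t, X t ω}).toReal ≤
      (μ {ω | ((i : ℕ) : ℝ) ≤ ∑ t, X t ω}).toReal ^ 2 :=
  stmt7_general μ n X hmeas hval hindep i
end

section
/- Let N be the sum of n independent Bernoulli variables and suppose j ≥ 2 is such that Pr[N ≥ j] ≥ 1/2 and Pr[N ≥ j+1] ≤ 1/2. Then (1/j)·Σ_{i=1}^{j} Pr[N ≥ i] − Pr[N ≥ j+1] ≥ (⌊j/2⌋/j)·(√(1/2) − 1/2) ≥ 1/15, using Pr[N ≥ ⌊j/2⌋] ≥ √(Pr[N ≥ j]) ≥ √(1/2). -/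
/-! The tail `i ↦ P[N ≥ i]` of a sum of independent Bernoulli variables is submultiplicative,
`P[N ≥ a + b] ≤ P[N ≥ a] P[N ≥ b]`: the partial sums move in unit steps, so on `{N ≥ a + b}` they
reach `a` exactly at a first time `m + 1`, and then the remaining variables, which are independent
of the first `m + 1`, must sum to at least `b`. With `a = ⌊j/2⌋` this gives
`P[N ≥ a] ≥ √P[N ≥ j] ≥ √(1/2)`; bounding the first `a` terms of the average by `√(1/2)` and the
remaining ones by `P[N ≥ j] ≥ 1/2 ≥ P[N ≥ j + 1]` gives the estimate. -/

open MeasureTheory ProbabilityTheory Finset Function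

theorem measurable_comap_sum {Ω ι : Type*} [MeasurableSpace Ω] (X : ι → Ω → ℝ) {s u : Finset ι}
    (hu : u ⊆ s) :
    Measurable[MeasurableSpace.pi.comap fun ω (i : s) => X i ω] fun ω => ∑ t ∈ u, X t ω :=
  Finset.measurable_sum _ fun t ht =>
    (measurable_pi_apply (⟨t, hu ht⟩ : s)).comp (comap_measurable fun ω (i : s) => X i ω)

theorem exists_natCast_sum_eq {Ω ι : Type*} {X : ι → Ω → ℝ} (hval : ∀ i ω, X i ω = 0 ∨ X i ω = 1)
    (s : Finset ι) (ω : Ω) : ∃ m : ℕ, ∑ t ∈ s, X t ω = m :=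
  ⟨∑ t ∈ s, if X t ω = 1 then 1 else 0, by
    push_cast
    exact sum_congr rfl fun t _ => by rcases hval t ω with h | h <;> simp [h]⟩

namespace Bernoulli

variable {Ω : Type*} {n : ℕ} (X : Fin n → Ω → ℝ)

def partialSum (k : ℕ) (ω : Ω) : ℝ := ∑ t ∈ {t : Fin n | (t : ℕ) < k}, X t ω

def tailSum (k : ℕ) (ω : Ω) : ℝ := ∑ t ∈ {t : Fin n | k ≤ (t : ℕ)}, X t ω

theorem partialSum_add_tailSum (k : ℕ) (ω : Ω) :
    partialSum X k ω + tailSum X k ω = ∑ t, X t ω := by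
  simp only [partialSum, tailSum, ← not_lt]
  exact sum_filter_add_sum_filter_not _ _ _

theorem partialSum_zero (ω : Ω) : partialSum X 0 ω = 0 := by
  simp [partialSum]

theorem partialSum_of_le {k : ℕ} (hk : n ≤ k) (ω : Ω) : partialSum X k ω = ∑ t, X t ω := by
  rw [partialSum, filter_true_of_mem fun t _ => t.isLt.trans_le hk]

theorem partialSum_succ {m : ℕ} (hm : m < n) (ω : Ω) :
    partialSum X (m + 1) ω = partialSum X m ω + X ⟨m, hm⟩ ω := by
  have : ({t : Fin n | (t : ℕ) < m + 1} : Finset (Fin n)) =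
      insert ⟨m, hm⟩ ({t : Fin n | (t : ℕ) < m} : Finset (Fin n)) := by
    ext t
    simp only [Order.lt_add_one_iff, mem_filter, mem_univ, true_and, mem_insert, Fin.ext_iff]
    omega
  rw [partialSum, this, sum_insert (by simp), add_comm, partialSum]

variable {X}

theorem partialSum_mono (hX : ∀ t ω, 0 ≤ X t ω) (ω : Ω) : Monotone fun k => partialSum X k ω :=
  fun _ _ hkl => sum_le_sum_of_subset_of_nonneg
    (monotone_filter_right _ fun _ _ h => lt_of_lt_of_le h hkl) fun t _ _ => hX t ω

theorem partialSum_le_sum (hX : ∀ t ω, 0 ≤ X t ω) (k : ℕ) (ω : Ω) :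
    partialSum X k ω ≤ ∑ t, X t ω := by
  rw [← partialSum_add_tailSum X k ω, le_add_iff_nonneg_right]
  exact sum_nonneg fun t _ => hX t ω

theorem tailSum_le_sum (hX : ∀ t ω, 0 ≤ X t ω) (k : ℕ) (ω : Ω) :
    tailSum X k ω ≤ ∑ t, X t ω := by
  rw [← partialSum_add_tailSum X k ω, le_add_iff_nonneg_left]
  exact sum_nonneg fun t _ => hX t ω

variable (X) in
def firstPassage (a : ℝ) (m : ℕ) : Set Ω :=
  {ω | partialSum X m ω < a ∧ a ≤ partialSum X (m + 1) ω}

theorem pairwise_disjoint_firstPassage (hX : ∀ t ω, 0 ≤ X t ω) (a : ℝ) :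
    Pairwise (Disjoint on (firstPassage X a)) := by
  refine (pairwise_disjoint_on _).2 fun m m' hmm' => Set.disjoint_left.2 fun ω hω hω' => ?_
  have := partialSum_mono hX ω (Nat.succ_le_of_lt hmm')
  exact (hω.2.trans this).not_gt hω'.1

theorem exists_mem_firstPassage_le_tailSum (hval : ∀ i ω, X i ω = 0 ∨ X i ω = 1) {a b : ℕ}
    (ha : 0 < a) {ω : Ω} (h : (a + b : ℝ) ≤ ∑ t, X t ω) :
    ∃ m < n, ω ∈ firstPassage X a m ∧ (b : ℝ) ≤ tailSum X (m + 1) ω := by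
  have hex : ∃ k, (a : ℝ) ≤ partialSum X k ω :=
    ⟨n, by rw [partialSum_of_le X le_rfl]; linarith [b.cast_nonneg (α := ℝ)]⟩
  obtain ⟨m, hm⟩ : ∃ m, Nat.find hex = m + 1 := Nat.exists_eq_succ_of_ne_zero fun h0 => by
    have := Nat.find_spec hex
    rw [h0, partialSum_zero] at this
    exact ha.ne' (by exact_mod_cast this.antisymm a.cast_nonneg)
  have hcross : (a : ℝ) ≤ partialSum X (m + 1) ω := hm ▸ Nat.find_spec hex
  have hbefore : partialSum X m ω < a := not_le.1 (Nat.find_min hex (by omega))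
  have hmn : m < n := by
    by_contra! hnm
    rw [partialSum_of_le X hnm] at hbefore
    linarith [b.cast_nonneg (α := ℝ)]
  have hland : partialSum X (m + 1) ω ≤ a := by
    obtain ⟨c, hc⟩ := exists_natCast_sum_eq hval {t : Fin n | (t : ℕ) < m} ω
    have hstep : X ⟨m, hmn⟩ ω ≤ 1 := by rcases hval ⟨m, hmn⟩ ω with h | h <;> simp [h]
    rw [partialSum_succ X hmn]
    rw [partialSum, hc] at hbefore ⊢
    have : (c + 1 : ℝ) ≤ a := by exact_mod_cast Nat.succ_le_of_lt (by exact_mod_cast hbefore)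
    linarith
  refine ⟨m, hmn, ⟨hbefore, hcross⟩, ?_⟩
  linarith [partialSum_add_tailSum X (m + 1) ω]

variable [MeasurableSpace Ω] {μ : Measure Ω}

theorem measurableSet_firstPassage (hmeas : ∀ i, Measurable (X i)) (a : ℝ) (m : ℕ) :
    MeasurableSet (firstPassage X a m) :=
  (measurableSet_lt (Finset.measurable_sum _ fun t _ => hmeas t) measurable_const).inter
    (measurableSet_le measurable_const (Finset.measurable_sum _ fun t _ => hmeas t))

theorem measure_firstPassage_inter_eq_mul (hmeas : ∀ i, Measurable (X i)) (hindep : iIndepFun X μ)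
    (a b : ℝ) (m : ℕ) :
    μ (firstPassage X a m ∩ {ω | b ≤ tailSum X (m + 1) ω}) =
      μ (firstPassage X a m) * μ {ω | b ≤ tailSum X (m + 1) ω} := by
  have hdisj : Disjoint ({t : Fin n | (t : ℕ) < m + 1} : Finset (Fin n))
      ({t : Fin n | m + 1 ≤ (t : ℕ)} : Finset (Fin n)) :=
    disjoint_filter.2 fun t _ h => not_le.2 h
  refine (hindep.indepFun_finset _ _ hdisj hmeas).meas_inter ?_ ?_
  · refine (measurableSet_lt (measurable_comap_sum X ?_) measurable_const).inter
      (measurableSet_le measurable_const (measurable_comap_sum X subset_rfl))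
    exact monotone_filter_right _ fun _ _ h => h.trans (lt_add_one m)
  · exact measurableSet_le measurable_const (measurable_comap_sum X subset_rfl)

theorem measure_add_le_sum_le_mul [IsProbabilityMeasure μ] (hmeas : ∀ i, Measurable (X i))
    (hval : ∀ i ω, X i ω = 0 ∨ X i ω = 1) (hindep : iIndepFun X μ) (a b : ℕ) :
    μ {ω | (a + b : ℝ) ≤ ∑ t, X t ω} ≤
      μ {ω | (a : ℝ) ≤ ∑ t, X t ω} * μ {ω | (b : ℝ) ≤ ∑ t, X t ω} := by
  have hX : ∀ t ω, 0 ≤ X t ω := fun t ω => by rcases hval t ω with h | h <;> simp [h]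
  rcases Nat.eq_zero_or_pos a with rfl | ha
  · have : {ω | (0 : ℝ) ≤ ∑ t, X t ω} = Set.univ :=
      Set.eq_univ_of_forall fun ω => sum_nonneg fun t _ => hX t ω
    simp only [Nat.cast_zero, zero_add, this, measure_univ, one_mul, le_refl]
  set B : ℕ → Set Ω := fun m => {ω | (b : ℝ) ≤ tailSum X (m + 1) ω}
  calc μ {ω | (a + b : ℝ) ≤ ∑ t, X t ω}
      ≤ μ (⋃ m ∈ range n, firstPassage X a m ∩ B m) := measure_mono fun ω hω => by
        obtain ⟨m, hm, hA, hB⟩ := exists_mem_firstPassage_le_tailSum hval ha hω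
        exact Set.mem_biUnion (mem_range.2 hm) ⟨hA, hB⟩
    _ ≤ ∑ m ∈ range n, μ (firstPassage X a m ∩ B m) := measure_biUnion_finset_le _ _
    _ = ∑ m ∈ range n, μ (firstPassage X a m) * μ (B m) :=
        sum_congr rfl fun m _ => measure_firstPassage_inter_eq_mul hmeas hindep _ _ m
    _ ≤ ∑ m ∈ range n, μ (firstPassage X a m) * μ {ω | (b : ℝ) ≤ ∑ t, X t ω} := by
        gcongr with m
        exact fun ω hω => hω.trans (tailSum_le_sum hX _ ω)
    _ = μ (⋃ m ∈ range n, firstPassage X a m) * μ {ω | (b : ℝ) ≤ ∑ t, X t ω} := by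
        rw [← sum_mul, measure_biUnion_finset ((pairwise_disjoint_firstPassage hX _).set_pairwise _)
          fun m _ => measurableSet_firstPassage hmeas _ m]
    _ ≤ μ {ω | (a : ℝ) ≤ ∑ t, X t ω} * μ {ω | (b : ℝ) ≤ ∑ t, X t ω} := by
        gcongr
        exact Set.iUnion₂_subset fun m _ ω hω => hω.2.trans (partialSum_le_sum hX _ ω)

end Bernoulli

theorem le_average_sub_of_antitone {p : ℕ → ℝ} (hp : Antitone p) {a j : ℕ} (haj : a ≤ j)
    (hj : 0 < j) {s c : ℝ} (hs : s ≤ p a) (hc : c ≤ p j) (hc' : p (j + 1) ≤ c) :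
    (a : ℝ) / j * (s - c) ≤ 1 / j * ∑ i ∈ Icc 1 j, p i - p (j + 1) := by
  have hsum : a * s + (j - a) * c ≤ ∑ i ∈ Icc 1 j, p i := by
    rw [show Icc 1 j = Ioc 0 j from Icc_add_one_left_eq_Ioc 0 j,
      ← sum_Ioc_consecutive p (Nat.zero_le a) haj]
    have h1 := card_nsmul_le_sum (Ioc 0 a) p s fun i hi => hs.trans (hp (mem_Ioc.1 hi).2)
    have h2 := card_nsmul_le_sum (Ioc a j) p c fun i hi => hc.trans (hp (mem_Ioc.1 hi).2)
    simp only [Nat.card_Ioc, nsmul_eq_mul, Nat.cast_sub haj, Nat.sub_zero] at h1 h2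
    linarith
  calc (a : ℝ) / j * (s - c) = 1 / j * (a * s + (j - a) * c) - c := by field_simp; ring
    _ ≤ 1 / j * ∑ i ∈ Icc 1 j, p i - p (j + 1) := by gcongr

theorem one_div_fifteen_le_div_two_div_mul {j : ℕ} (hj : 2 ≤ j) :
    1 / 15 ≤ ((j / 2 : ℕ) : ℝ) / j * (√(1 / 2) - 1 / 2) := by
  have hthird : 1 / 3 ≤ ((j / 2 : ℕ) : ℝ) / j := by
    rw [le_div_iff₀ (by positivity)]
    have : j ≤ 3 * (j / 2) := by omega
    have : (j : ℝ) ≤ 3 * (j / 2 : ℕ) := by exact_mod_cast this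
    linarith
  have hsqrt : 7 / 10 ≤ √(1 / 2) := (Real.le_sqrt (by norm_num) (by norm_num)).2 (by norm_num)
  nlinarith

/-- Let `N` be the sum of `n` independent Bernoulli variables, and suppose `j ≥ 2`
satisfies `Pr[N ≥ j] ≥ 1/2` and `Pr[N ≥ j+1] ≤ 1/2`. Then
`(1/j)·Σ_{i=1}^{j} Pr[N ≥ i] − Pr[N ≥ j+1] ≥ (⌊j/2⌋/j)·(√(1/2) − 1/2) ≥ 1/15`. -/
theorem stmt15 {Ω : Type*} [MeasurableSpace Ω] (μ : Measure Ω) [IsProbabilityMeasure μ]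
    (n : ℕ) (X : Fin n → Ω → ℝ)
    (hmeas : ∀ i, Measurable (X i))
    (hval : ∀ i ω, X i ω = 0 ∨ X i ω = 1)
    (hindep : iIndepFun X μ)
    (j : ℕ) (hj : 2 ≤ j)
    (hhalf : (1 : ℝ) / 2 ≤ (μ {ω | (j : ℝ) ≤ ∑ t, X t ω}).toReal)
    (hhalf' : (μ {ω | ((j : ℝ) + 1) ≤ ∑ t, X t ω}).toReal ≤ 1 / 2) :
    (1 / (j : ℝ)) *
        (∑ i ∈ Finset.Icc 1 j, (μ {ω | (i : ℝ) ≤ ∑ t, X t ω}).toReal) -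
      (μ {ω | ((j : ℝ) + 1) ≤ ∑ t, X t ω}).toReal ≥
      ((j / 2 : ℕ) : ℝ) / (j : ℝ) * (Real.sqrt (1 / 2) - 1 / 2) ∧
    ((j / 2 : ℕ) : ℝ) / (j : ℝ) * (Real.sqrt (1 / 2) - 1 / 2) ≥ 1 / 15 := by
  set a := j / 2
  set p : ℕ → ℝ := fun i => (μ {ω | (i : ℝ) ≤ ∑ t, X t ω}).toReal
  have hp : Antitone p := fun i k hik =>
    ENNReal.toReal_mono (measure_ne_top _ _) <|
      measure_mono <| Set.ofPred_subset_ofPred.2 fun ω hω => (Nat.cast_le.2 hik).trans hω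
  have hsq : 1 / 2 ≤ p a ^ 2 := calc
    1 / 2 ≤ p j := hhalf
    _ ≤ p (a + a) := hp (by omega)
    _ ≤ p a ^ 2 := by
      rw [sq, ← ENNReal.toReal_mul]
      refine ENNReal.toReal_mono (by finiteness) ?_
      simpa using Bernoulli.measure_add_le_sum_le_mul hmeas hval hindep a a
  have hpa : √(1 / 2) ≤ p a := (Real.sqrt_le_left ENNReal.toReal_nonneg).2 hsq
  have hpj : p (j + 1) = (μ {ω | ((j : ℝ) + 1) ≤ ∑ t, X t ω}).toReal := by simp [p]
  refine ⟨?_, one_div_fifteen_le_div_two_div_mul hj⟩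
  rw [ge_iff_le, ← hpj]
  exact le_average_sub_of_antitone hp (Nat.div_le_self j 2) (by omega) hpa hhalf (hpj ▸ hhalf')
end
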